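/- arXiv:1807.09721 — 4 statements merged into one kernel-verified Lean document; each statement's English description precedes it below -/
import Mathlib

section
/- Let v : ℝ → ℝ and n : ℝ → ℝ be differentiable functions and c₀ ≠ 0 a real constant. Suppose x, y : ℝ → ℝ are twice differentiable functions satisfying x''(t) = (c₀/2) * v'(x(t)) and x(t) * y''(t) = (c₀ * y(t) * v'(x(t)) + 2 * n'(t))/2 for all t. Then the function I(t) = -(1/c₀) * (x'(t))^2 + y(t) * x'(t) - x(t) * y'(t) + v(x(t)) + n(t) is constant in t (i.e., its derivative vanishes identically). -/
/-! Differentiating `I` and eliminating `x''` with the first equation, the terms in `x' v'(x)` cancel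
and what remains is `(c₀/2) y v'(x) + n' - x y''`, which vanishes by the second equation. -/

theorem HasDerivAt.quadratic_first_integral {v n x x' y y' : ℝ → ℝ} {c₀ t v' n' x'' y'' : ℝ}
    (hx : HasDerivAt x (x' t) t) (hx' : HasDerivAt x' x'' t)
    (hy : HasDerivAt y (y' t) t) (hy' : HasDerivAt y' y'' t)
    (hv : HasDerivAt v v' (x t)) (hn : HasDerivAt n n' t) :
    HasDerivAt (fun t => -(1 / c₀) * x' t ^ 2 + y t * x' t - x t * y' t + v (x t) + n t)
      (-(2 / c₀) * x' t * x'' + y t * x'' - x t * y'' + v' * x' t + n') t := by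
  have := (((((hx'.pow 2).const_mul (-(1 / c₀))).add (hy.mul hx')).sub (hx.mul hy')).add
    (hv.comp t hx)).add hn
  exact this.congr_deriv (by push_cast; ring)

theorem quadratic_first_integral_application
    (v n x y : ℝ → ℝ) (c₀ : ℝ) (hc₀ : c₀ ≠ 0)
    (hv : Differentiable ℝ v) (hn : Differentiable ℝ n)
    (hx : Differentiable ℝ x) (hx' : Differentiable ℝ (deriv x))
    (hy : Differentiable ℝ y) (hy' : Differentiable ℝ (deriv y))
    (heqx : ∀ t, deriv (deriv x) t = (c₀ / 2) * deriv v (x t))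
    (heqy : ∀ t, x t * deriv (deriv y) t =
      (c₀ * y t * deriv v (x t) + 2 * deriv n t) / 2) :
    ∀ t, deriv (fun t => -(1 / c₀) * (deriv x t) ^ 2 + y t * deriv x t
      - x t * deriv y t + v (x t) + n t) t = 0 := by
  intro t
  rw [((hx t).hasDerivAt.quadratic_first_integral (hx' t).hasDerivAt (hy t).hasDerivAt
    (hy' t).hasDerivAt (hv (x t)).hasDerivAt (hn t).hasDerivAt).deriv, heqx t]
  linear_combination -heqy t - (deriv x t * deriv v (x t)) * mul_inv_cancel₀ hc₀
end

section
/- Let X be a smooth vector field on flat ℝⁿ and φ : ℝⁿ → ℝ smooth, such that X is a projective collineation: ∂_b∂_c X^a = δ^a_b ∂_c φ + δ^a_c ∂_b φ for all a, b, c. Then the symmetric tensor C_{ab} = (∂_a X_b + ∂_b X_a)/2 - 2 φ δ_{ab} is a Killing tensor of order 2, i.e., ∂_c C_{ab} + ∂_a C_{bc} + ∂_b C_{ca} = 0. -/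
/-- Partial derivative of `f` in the `i`-th coordinate direction at `x`. -/
noncomputable def pd {n : ℕ} (f : (Fin n → ℝ) → ℝ) (i : Fin n) (x : Fin n → ℝ) : ℝ :=
  fderiv ℝ f x (Pi.single i 1)

lemma pd_comb {n : ℕ} (f g h : (Fin n → ℝ) → ℝ) (d : ℝ) (c : Fin n) (x : Fin n → ℝ)
    (hf : DifferentiableAt ℝ f x) (hg : DifferentiableAt ℝ g x)
    (hh : DifferentiableAt ℝ h x) :
    pd (fun z => (f z + g z) / 2 - 2 * h z * d) c x
      = (pd f c x + pd g c x) / 2 - 2 * pd h c x * d := by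
  have heq : (fun z => (f z + g z) / 2 - 2 * h z * d)
      = fun z => (2:ℝ)⁻¹ * (f z + g z) + (-(2*d)) * h z := by
    funext z; ring
  have H := ((hf.hasFDerivAt.add hg.hasFDerivAt).const_mul ((2:ℝ)⁻¹)).add
    (hh.hasFDerivAt.const_mul (-(2*d)))
  unfold pd
  rw [heq, (show HasFDerivAt (fun z => (2:ℝ)⁻¹ * (f z + g z) + (-(2*d)) * h z) _ x from H).fderiv]
  simp
  ring

theorem projective_collineation_gives_killing_tensor
    {n : ℕ} (X : (Fin n → ℝ) → Fin n → ℝ) (φ : (Fin n → ℝ) → ℝ)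
    (hX : ContDiff ℝ (⊤ : ℕ∞) X) (hφ : ContDiff ℝ (⊤ : ℕ∞) φ)
    (hproj : ∀ (a b c : Fin n) (x : Fin n → ℝ),
      pd (fun z => pd (fun w => X w a) c z) b x =
        (if a = b then 1 else 0) * pd φ c x + (if a = c then 1 else 0) * pd φ b x) :
    let C : Fin n → Fin n → (Fin n → ℝ) → ℝ :=
      fun a b x => (pd (fun z => X z b) a x + pd (fun z => X z a) b x) / 2
        - 2 * φ x * (if a = b then 1 else 0)
    ∀ (a b c : Fin n) (x : Fin n → ℝ),
      pd (C a b) c x + pd (C b c) a x + pd (C c a) b x = 0 := by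
  intro C a b c x
  have hXd : ∀ d : Fin n, ContDiff ℝ (⊤ : ℕ∞) (fun z => X z d) := fun d =>
    (contDiff_pi.mp hX) d
  have Dpd : ∀ d e : Fin n, ∀ y, DifferentiableAt ℝ (fun z => pd (fun w => X w d) e z) y := by
    intro d e y
    have : ContDiff ℝ (⊤ : ℕ∞) (fun z => fderiv ℝ (fun w => X w d) z (Pi.single e 1)) :=
      (((hXd d).fderiv_right (by simp)).clm_apply contDiff_const)
    exact (this.differentiable (by simp)).differentiableAt
  have Dφ : ∀ y, DifferentiableAt ℝ φ y := fun y =>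
    (hφ.differentiable (by simp)).differentiableAt
  have key : ∀ a b c : Fin n,
      pd (C a b) c x = (pd (fun z => pd (fun w => X w b) a z) c x
        + pd (fun z => pd (fun w => X w a) b z) c x) / 2
        - 2 * pd φ c x * (if a = b then 1 else 0) := by
    intro a b c
    exact pd_comb _ _ _ _ c x (Dpd b a x) (Dpd a b x) (Dφ x)
  rw [key, key, key, hproj b c a, hproj a c b, hproj c a b, hproj b a c,
    hproj a b c, hproj c b a]
  have e1 : (if b = a then (1:ℝ) else 0) = (if a = b then 1 else 0) := by simp [eq_comm]
  have e2 : (if c = a then (1:ℝ) else 0) = (if a = c then 1 else 0) := by simp [eq_comm]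
  have e3 : (if c = b then (1:ℝ) else 0) = (if b = c then 1 else 0) := by simp [eq_comm]
  rw [e1, e2, e3]
  ring
end

section
/- Let S : ℝⁿ → ℝ be a smooth affine function (Hess S = 0) and let M be a Killing vector of the flat Euclidean metric on ℝⁿ. Then for the vector field L_a = S · M_a, the symmetric tensor C_{ab} = ∂_{(a}L_{b)} is a Killing tensor of order 2, i.e. ∂_c C_{ab} + ∂_a C_{bc} + ∂_b C_{ca} = 0. -/
lemma pd_contDiff {n : ℕ} {f : (Fin n → ℝ) → ℝ} (hf : ContDiff ℝ (⊤ : ℕ∞) f) (i : Fin n) :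
    ContDiff ℝ (⊤ : ℕ∞) (pd f i) :=
  (hf.fderiv_right (by simp)).clm_apply contDiff_const

lemma pd_mul {n : ℕ} {f g : (Fin n → ℝ) → ℝ} {x : Fin n → ℝ}
    (hf : DifferentiableAt ℝ f x) (hg : DifferentiableAt ℝ g x) (i : Fin n) :
    pd (fun z => f z * g z) i x = pd f i x * g x + f x * pd g i x := by
  unfold pd
  rw [fderiv_fun_mul hf hg]
  simp only [ContinuousLinearMap.add_apply, ContinuousLinearMap.smul_apply, smul_eq_mul]
  ring

lemma pd_add {n : ℕ} {f g : (Fin n → ℝ) → ℝ} {x : Fin n → ℝ}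
    (hf : DifferentiableAt ℝ f x) (hg : DifferentiableAt ℝ g x) (i : Fin n) :
    pd (fun z => f z + g z) i x = pd f i x + pd g i x := by
  unfold pd
  rw [fderiv_fun_add hf hg]
  simp

lemma pd_div_const {n : ℕ} {f : (Fin n → ℝ) → ℝ} {x : Fin n → ℝ}
    (hf : DifferentiableAt ℝ f x) (c : ℝ) (i : Fin n) :
    pd (fun z => f z / c) i x = pd f i x / c := by
  unfold pd
  simp only [div_eq_mul_inv]
  rw [fderiv_mul_const hf]
  simp [mul_comm]

theorem affine_times_killing_gives_killing_tensor
    {n : ℕ} (S : (Fin n → ℝ) → ℝ) (M : (Fin n → ℝ) → Fin n → ℝ)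
    (hS : ContDiff ℝ (⊤ : ℕ∞) S) (hM : ContDiff ℝ (⊤ : ℕ∞) M)
    -- S is affine: its Hessian vanishes (gradient Killing vector ∇S)
    (hhess : ∀ (a b : Fin n) (x : Fin n → ℝ), pd (fun z => pd S a z) b x = 0)
    -- M is a Killing vector of the flat metric
    (hMkill : ∀ (a b : Fin n) (x : Fin n → ℝ),
      pd (fun z => M z b) a x + pd (fun z => M z a) b x = 0) :
    let L : (Fin n → ℝ) → Fin n → ℝ := fun x a => S x * M x a
    let C : Fin n → Fin n → (Fin n → ℝ) → ℝ :=
      fun a b x => (pd (fun z => L z b) a x + pd (fun z => L z a) b x) / 2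
    ∀ (a b c : Fin n) (x : Fin n → ℝ),
      pd (C a b) c x + pd (C b c) a x + pd (C c a) b x = 0 := by
  intro L C a b c x
  have hMc : ∀ j : Fin n, ContDiff ℝ (⊤ : ℕ∞) (fun z => M z j) := fun j => (contDiff_pi.1 hM) j
  -- derivative of L
  have hL : ∀ (i j : Fin n) (y : Fin n → ℝ),
      pd (fun z => L z j) i y = pd S i y * M y j + S y * pd (fun z => M z j) i y := by
    intro i j y
    exact pd_mul (hS.differentiable (by simp) y) ((hMc j).differentiable (by simp) y) i
  -- C in simplified form
  have hC : ∀ (i j : Fin n),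
      C i j = fun y => (pd S i y * M y j + pd S j y * M y i) / 2 := by
    intro i j
    funext y
    show (pd (fun z => L z j) i y + pd (fun z => L z i) j y) / 2 = _
    rw [hL, hL]
    linear_combination (S y / 2) * hMkill i j y
  -- differentiability helpers
  have hdiff : ∀ (i j : Fin n) (y : Fin n → ℝ),
      DifferentiableAt ℝ (fun z => pd S i z * M z j) y :=
    fun i j y => ((pd_contDiff hS i).differentiable (by simp) y).mul
      ((hMc j).differentiable (by simp) y)
  -- derivative of C
  have hdC : ∀ (i j k : Fin n),
      pd (C i j) k x = (pd S i x * pd (fun z => M z j) k x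
        + pd S j x * pd (fun z => M z i) k x) / 2 := by
    intro i j k
    rw [hC]
    rw [pd_div_const ((hdiff i j x).fun_add (hdiff j i x)) 2, pd_add (hdiff i j x) (hdiff j i x),
        pd_mul ((pd_contDiff hS i).differentiable (by simp) x) ((hMc j).differentiable (by simp) x),
        pd_mul ((pd_contDiff hS j).differentiable (by simp) x) ((hMc i).differentiable (by simp) x),
        hhess, hhess]
    ring
  rw [hdC, hdC, hdC]
  have h1 := hMkill c b x
  have h2 := hMkill a c x
  have h3 := hMkill b a x
  linear_combination (pd S a x / 2) * h1 + (pd S b x / 2) * h2 + (pd S c x / 2) * h3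
end

section
/- Let x, y : ℝ → ℝ be twice differentiable with ẍ = F₁(x,y) and ÿ = F₂(x,y), and assume F₁(x,y) = (c₀/2) w(x) and x F₂(x,y) = (c₀/2) y w(x) + m for a continuous function w and constant m, where w = v' for a C¹ function v. Then I(t) = -(1/c₀) ẋ² + y ẋ - x ẏ + v(x) + m t is constant along the solution. -/
theorem first_integral_linear_boundary_term
    (x y : ℝ → ℝ) (F₁ F₂ : ℝ → ℝ → ℝ) (v : ℝ → ℝ) (c₀ m : ℝ)
    (hc₀ : c₀ ≠ 0)
    (hv : ContDiff ℝ 1 v)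
    (hx : Differentiable ℝ x) (hx' : Differentiable ℝ (deriv x))
    (hy : Differentiable ℝ y) (hy' : Differentiable ℝ (deriv y))
    (heqx : ∀ t, deriv (deriv x) t = F₁ (x t) (y t))
    (heqy : ∀ t, deriv (deriv y) t = F₂ (x t) (y t))
    (hF₁ : ∀ a b : ℝ, F₁ a b = (c₀ / 2) * deriv v a)
    (hF₂ : ∀ a b : ℝ, a * F₂ a b = (c₀ / 2) * b * deriv v a + m) :
    ∀ t, deriv (fun t => -(1 / c₀) * (deriv x t) ^ 2 + y t * deriv x t
      - x t * deriv y t + v (x t) + m * t) t = 0 := by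
  intro t
  have hvd : Differentiable ℝ v := hv.differentiable one_ne_zero
  have hX : HasDerivAt x (deriv x t) t := (hx t).hasDerivAt
  have hY : HasDerivAt y (deriv y t) t := (hy t).hasDerivAt
  have hX' : HasDerivAt (deriv x) (F₁ (x t) (y t)) t := by
    rw [← heqx t]; exact (hx' t).hasDerivAt
  have hY' : HasDerivAt (deriv y) (F₂ (x t) (y t)) t := by
    rw [← heqy t]; exact (hy' t).hasDerivAt
  have hV : HasDerivAt (fun s => v (x s)) (deriv v (x t) * deriv x t) t :=
    ((hvd (x t)).hasDerivAt).comp t hX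
  have hM : HasDerivAt (fun s : ℝ => m * s) m t := by
    simpa using (hasDerivAt_id t).const_mul m
  have H : HasDerivAt (fun t => -(1 / c₀) * (deriv x t) ^ 2 + y t * deriv x t
      - x t * deriv y t + v (x t) + m * t)
      (-(1 / c₀) * (2 * deriv x t * F₁ (x t) (y t))
        + (deriv y t * deriv x t + y t * F₁ (x t) (y t))
        - (deriv x t * deriv y t + x t * F₂ (x t) (y t))
        + deriv v (x t) * deriv x t + m) t := by
    exact ((((((hX'.pow 2).const_mul (-(1 / c₀))).add (hY.mul hX')).sub
      (hX.mul hY')).add hV).add hM).congr_deriv (by norm_num)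
  rw [H.deriv, hF₁, hF₂]
  field_simp
  ring
end
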